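/- Let α be a positive integer, Ω a nonempty finite set, and let μ assign to each subset S of {1,…,α} a probability mass function μ_S on Ω, satisfying the cut-and-paste property: h(μ_{S∪T}, μ_∅) = h(μ_S, μ_T) for all pairwise disjoint subsets S, T of {1,…,α}. Then for every subset S of {1,…,α}, h²(μ_∅, μ_S) ≤ 2·|S| · Σ_{i∈S} h²(μ_∅, μ_{{i}}). -/

import Mathlib

/-- The squared Hellinger distance between two probability mass functions on a
finite set: `h²(p,q) = (1/2)·Σ_ω (√(p ω) − √(q ω))²`. -/
noncomputable def hellingerSq {Ω : Type*} [Fintype Ω] (p q : Ω → ℝ) : ℝ :=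
  (1 / 2) * ∑ ω, (Real.sqrt (p ω) - Real.sqrt (q ω)) ^ 2

/-- The Hellinger distance `h(p,q) = √(h²(p,q))`. -/
noncomputable def hellinger {Ω : Type*} [Fintype Ω] (p q : Ω → ℝ) : ℝ :=
  Real.sqrt (hellingerSq p q)

/-!
Via `p ↦ (√(p ω / 2))_ω` the Hellinger distance is a Euclidean distance. Splitting off one
player at a time, cut-and-paste and the triangle inequality give
`h(μ_∅, μ_S) ≤ h(μ_∅, μ_{i}) + h(μ_∅, μ_{S \ {i}})`,
hence `h(μ_∅, μ_S) ≤ ∑_{i ∈ S} h(μ_∅, μ_{i})`. Squaring and Cauchy–Schwarz then bound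
`h²(μ_∅, μ_S)` by `|S| · ∑_{i ∈ S} h²(μ_∅, μ_{i})`.
-/

open Finset

theorem dist_le_sum_singletons_of_cutPaste {ι X : Type*} [DecidableEq ι] [PseudoMetricSpace X]
    (f : Finset ι → X)
    (hf : ∀ S T, Disjoint S T → dist (f (S ∪ T)) (f ∅) = dist (f S) (f T)) (S : Finset ι) :
    dist (f ∅) (f S) ≤ ∑ i ∈ S, dist (f ∅) (f {i}) := by
  induction S using Finset.induction_on with
  | empty => simp
  | @insert a T ha ih =>
    rw [sum_insert ha, dist_comm, insert_eq, hf _ _ (disjoint_singleton_left.mpr ha)]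
    calc dist (f {a}) (f T) ≤ dist (f {a}) (f ∅) + dist (f ∅) (f T) := dist_triangle _ _ _
      _ ≤ dist (f ∅) (f {a}) + ∑ i ∈ T, dist (f ∅) (f {i}) := by
        rw [dist_comm]; gcongr

section Hellinger

variable {Ω : Type*} [Fintype Ω]

noncomputable def hellingerEmbedding (p : Ω → ℝ) : EuclideanSpace ℝ Ω :=
  WithLp.toLp 2 fun ω => √(p ω / 2)

theorem hellinger_eq_dist (p q : Ω → ℝ) :
    hellinger p q = dist (hellingerEmbedding p) (hellingerEmbedding q) := by
  have h2 : √(2 : ℝ) ^ 2 = 2 := Real.sq_sqrt zero_le_two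
  rw [EuclideanSpace.dist_eq, hellinger, hellingerSq, mul_sum]
  congr 1
  refine sum_congr rfl fun ω _ => ?_
  rw [hellingerEmbedding, hellingerEmbedding, PiLp.toLp_apply, PiLp.toLp_apply, Real.dist_eq,
    sq_abs, Real.sqrt_div' _ zero_le_two, Real.sqrt_div' _ zero_le_two, ← sub_div, div_pow, h2]
  ring

theorem sq_hellinger (p q : Ω → ℝ) : hellinger p q ^ 2 = hellingerSq p q :=
  Real.sq_sqrt (by unfold hellingerSq; positivity)

end Hellinger

theorem hellingerSq_le_card_mul_sum_singletons_general {α : ℕ}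
    {Ω : Type*} [Fintype Ω]
    (μ : Finset (Fin α) → Ω → ℝ)
    (hcutpaste : ∀ S T : Finset (Fin α), Disjoint S T →
      hellinger (μ (S ∪ T)) (μ ∅) = hellinger (μ S) (μ T))
    (S : Finset (Fin α)) :
    hellingerSq (μ ∅) (μ S) ≤
      2 * (S.card : ℝ) * ∑ i ∈ S, hellingerSq (μ ∅) (μ {i}) := by
  have hsubadd : hellinger (μ ∅) (μ S) ≤ ∑ i ∈ S, hellinger (μ ∅) (μ {i}) := by
    simp only [hellinger_eq_dist] at hcutpaste ⊢
    exact dist_le_sum_singletons_of_cutPaste (fun S => hellingerEmbedding (μ S)) hcutpaste S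
  have hsq_nonneg : 0 ≤ ∑ i ∈ S, hellingerSq (μ ∅) (μ {i}) :=
    sum_nonneg fun i _ => sq_hellinger (μ ∅) (μ {i}) ▸ sq_nonneg _
  calc hellingerSq (μ ∅) (μ S) = hellinger (μ ∅) (μ S) ^ 2 := (sq_hellinger _ _).symm
    _ ≤ (∑ i ∈ S, hellinger (μ ∅) (μ {i})) ^ 2 := by
      gcongr
      rw [hellinger_eq_dist]; exact dist_nonneg
    _ ≤ S.card * ∑ i ∈ S, hellinger (μ ∅) (μ {i}) ^ 2 := sq_sum_le_card_mul_sum_sq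
    _ = S.card * ∑ i ∈ S, hellingerSq (μ ∅) (μ {i}) := by simp only [sq_hellinger]
    _ ≤ 2 * S.card * ∑ i ∈ S, hellingerSq (μ ∅) (μ {i}) := by
      rw [mul_assoc]
      exact le_mul_of_one_le_left (by positivity) one_le_two

/-- If `μ` assigns to each subset `S ⊆ {1,…,α}` a probability mass function `μ S` on a
nonempty finite set `Ω` satisfying the cut-and-paste property
`h(μ (S ∪ T), μ ∅) = h(μ S, μ T)` for disjoint `S, T`, then for every subset `S`,
`h²(μ ∅, μ S) ≤ 2·|S| · Σ_{i ∈ S} h²(μ ∅, μ {i})`. -/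
theorem hellingerSq_le_card_mul_sum_singletons {α : ℕ} (hα : 0 < α)
    {Ω : Type*} [Fintype Ω] [Nonempty Ω]
    (μ : Finset (Fin α) → Ω → ℝ)
    (hnonneg : ∀ S ω, 0 ≤ μ S ω)
    (hsum : ∀ S, ∑ ω, μ S ω = 1)
    (hcutpaste : ∀ S T : Finset (Fin α), Disjoint S T →
      hellinger (μ (S ∪ T)) (μ ∅) = hellinger (μ S) (μ T))
    (S : Finset (Fin α)) :
    hellingerSq (μ ∅) (μ S) ≤
      2 * (S.card : ℝ) * ∑ i ∈ S, hellingerSq (μ ∅) (μ {i}) :=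
  hellingerSq_le_card_mul_sum_singletons_general μ hcutpaste S
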